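/- The width of the ordered set P = {(i,j) : j ∈ [n], i ∈ [λ_j]}, where 0 < λ₁ < ⋯ < λₙ and (i,j) ≤ (i′,j′) iff i ≤ i′ and λ_j − i ≥ λ_{j′} − i′, equals d(λ₁,…,λₙ): P can be partitioned into d(λ₁,…,λₙ) chains and contains an antichain of that size. -/
import Mathlib


/-- `j` is a valid index sequence of length `d` for `{lam 1 < ⋯ < lam n}`. -/
def ValidSeq (n : ℕ) (lam : ℕ → ℕ) (d : ℕ) (j : ℕ → ℕ) : Prop :=
  j 1 = 1 ∧ j d ≤ n ∧
    ∀ k, 1 ≤ k → k < d →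
      j (k + 1) = if 1 < lam (j k + 1) - lam (j k) then j k + 1 else j k + 2

/-- `d(lam 1,…,lam n)`: the maximal length of a valid index sequence. -/
noncomputable def dI (n : ℕ) (lam : ℕ → ℕ) : ℕ :=
  sSup {d : ℕ | 1 ≤ d ∧ ∃ j : ℕ → ℕ, ValidSeq n lam d j}

/-- Membership in the ordered set `P = {(i,j) : j ∈ [n], i ∈ [lam j]}`. -/
def PMem (n : ℕ) (lam : ℕ → ℕ) (p : ℕ × ℕ) : Prop :=
  1 ≤ p.2 ∧ p.2 ≤ n ∧ 1 ≤ p.1 ∧ p.1 ≤ lam p.2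

/-- The order on `P`: `(i,j) ≤ (i',j')` iff `i ≤ i'` and `lam j − i ≥ lam j' − i'`. -/
def POrd (lam : ℕ → ℕ) (p q : ℕ × ℕ) : Prop :=
  p.1 ≤ q.1 ∧ lam q.2 - q.1 ≤ lam p.2 - p.1

/-! ### Auxiliary definitions -/

/-- One step of the greedy index sequence. -/
def gstep (lam : ℕ → ℕ) (j : ℕ) : ℕ :=
  if 1 < lam (j + 1) - lam j then j + 1 else j + 2

/-- The greedy index sequence: `gseq lam k` is `j (k+1)` of the canonical valid sequence. -/
def gseq (lam : ℕ → ℕ) : ℕ → ℕ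
  | 0 => 1
  | k + 1 => gstep lam (gseq lam (k))

/-- Strict incomparability relation: strictly larger in both coordinates `(i, lam j - i)`. -/
def Rstr (lam : ℕ → ℕ) (p q : ℕ × ℕ) : Prop :=
  p.1 < q.1 ∧ lam p.2 - p.1 < lam q.2 - q.1

lemma gseq_succ (lam : ℕ → ℕ) (m : ℕ) : gseq lam (m + 1) = gstep lam (gseq lam m) := rfl

lemma gstep_bounds (lam : ℕ → ℕ) (j : ℕ) : j + 1 ≤ gstep lam j ∧ gstep lam j ≤ j + 2 := by
  unfold gstep; split <;> omega

lemma gseq_mono (lam : ℕ → ℕ) : Monotone (gseq lam) := by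
  apply monotone_nat_of_le_succ
  intro m
  rw [gseq_succ]
  have := gstep_bounds lam (gseq lam m)
  omega

lemma gseq_ge (lam : ℕ → ℕ) : ∀ m, m + 1 ≤ gseq lam m := by
  intro m
  induction m with
  | zero => simp [gseq]
  | succ m ih =>
    rw [gseq_succ]
    have := gstep_bounds lam (gseq lam m)
    omega

section Main

variable (n : ℕ) (lam : ℕ → ℕ)

lemma lam_mono (hlam : ∀ k < n, lam k < lam (k + 1)) :
    ∀ a b, a ≤ b → b ≤ n → lam a ≤ lam b := by
  intro a b hab hbn
  induction b with
  | zero =>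
    have : a = 0 := by omega
    subst this; exact le_rfl
  | succ b ih =>
    rcases Nat.eq_or_lt_of_le hab with h | h
    · rw [h]
    · have h1 : lam a ≤ lam b := ih (by omega) (by omega)
      have h2 : lam b < lam (b + 1) := hlam b (by omega)
      omega

lemma lam_gseq_step (hlam : ∀ k < n, lam k < lam (k + 1)) (m : ℕ)
    (hm : gseq lam (m + 1) ≤ n) :
    lam (gseq lam m) + 2 ≤ lam (gseq lam (m + 1)) := by
  rw [gseq_succ] at hm ⊢
  unfold gstep at hm ⊢
  by_cases h : 1 < lam (gseq lam m + 1) - lam (gseq lam m)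
  · rw [if_pos h]
    omega
  · rw [if_neg h] at hm ⊢
    have h1 := hlam (gseq lam m) (by omega)
    have h2 := hlam (gseq lam m + 1) (by omega)
    have e : gseq lam m + 1 + 1 = gseq lam m + 2 := by omega
    rw [e] at h2
    omega

lemma lam_gseq_gap (hlam : ∀ k < n, lam k < lam (k + 1)) (a b : ℕ) (hab : a ≤ b)
    (hb : gseq lam b ≤ n) :
    lam (gseq lam a) + 2 * (b - a) ≤ lam (gseq lam b) := by
  induction b with
  | zero =>
    have : a = 0 := by omega
    subst this; simp
  | succ b ih =>
    rcases Nat.eq_or_lt_of_le hab with h | h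
    · rw [h]; simp
    · have hb' : gseq lam b ≤ n := le_trans (gseq_mono lam (by omega : b ≤ b + 1)) hb
      have h1 := ih (by omega) hb'
      have h2 := lam_gseq_step n lam hlam b hb
      omega

lemma lam_gseq_ge (hn : 1 ≤ n) (hlam0 : lam 0 = 0) (hlam : ∀ k < n, lam k < lam (k + 1))
    (m : ℕ) (hm : gseq lam m ≤ n) : 2 * m + 1 ≤ lam (gseq lam m) := by
  have h0 : lam 0 < lam 1 := hlam 0 (by omega)
  have h1 : 1 ≤ lam (gseq lam 0) := by
    show 1 ≤ lam 1
    omega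
  have h2 := lam_gseq_gap n lam hlam 0 m (by omega) hm
  omega

lemma valid_eq_gseq (d : ℕ) (j : ℕ → ℕ) (hv : ValidSeq n lam d j) :
    ∀ k, k < d → j (k + 1) = gseq lam k := by
  intro k
  induction k with
  | zero => intro _; exact hv.1
  | succ k ih =>
    intro hk
    have ihk := ih (by omega)
    have := hv.2.2 (k + 1) (by omega) hk
    rw [ihk] at this
    rw [gseq_succ]
    unfold gstep
    exact this

lemma dI_mem_iff (d : ℕ) :
    (1 ≤ d ∧ ∃ j : ℕ → ℕ, ValidSeq n lam d j) ↔ (1 ≤ d ∧ gseq lam (d - 1) ≤ n) := by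
  constructor
  · rintro ⟨hd, j, hv⟩
    refine ⟨hd, ?_⟩
    obtain ⟨m, rfl⟩ : ∃ m, d = m + 1 := ⟨d - 1, by omega⟩
    have heq := valid_eq_gseq n lam (m + 1) j hv m (by omega)
    have h2 := hv.2.1
    simp only [Nat.add_sub_cancel]
    rw [← heq]
    exact h2
  · rintro ⟨hd, hg⟩
    refine ⟨hd, fun k => gseq lam (k - 1), ?_, ?_, ?_⟩
    · rfl
    · exact hg
    · intro k hk1 hkd
      obtain ⟨m, rfl⟩ : ∃ m, k = m + 1 := ⟨k - 1, by omega⟩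
      simp only [Nat.add_sub_cancel]
      rw [gseq_succ]
      rfl

lemma dI_spec (hn : 1 ≤ n) :
    1 ≤ dI n lam ∧ gseq lam (dI n lam - 1) ≤ n ∧
      ∀ d, 1 ≤ d → gseq lam (d - 1) ≤ n → d ≤ dI n lam := by
  have hbdd : BddAbove {d : ℕ | 1 ≤ d ∧ ∃ j : ℕ → ℕ, ValidSeq n lam d j} := by
    refine ⟨n, fun d hd => ?_⟩
    have := (dI_mem_iff n lam d).1 hd
    have hge := gseq_ge lam (d - 1)
    omega
  have hne : 1 ∈ {d : ℕ | 1 ≤ d ∧ ∃ j : ℕ → ℕ, ValidSeq n lam d j} := by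
    rw [Set.mem_setOf_eq, dI_mem_iff]
    exact ⟨le_refl 1, by simpa [gseq] using hn⟩
  have hmem := Nat.sSup_mem ⟨1, hne⟩ hbdd
  rw [Set.mem_setOf_eq, dI_mem_iff] at hmem
  refine ⟨hmem.1, hmem.2, fun d hd hg => ?_⟩
  exact le_csSup hbdd (by rw [Set.mem_setOf_eq, dI_mem_iff]; exact ⟨hd, hg⟩)

/-- Any strict chain in `P` has length at most `dI n lam`. -/
lemma chain_le (hn : 1 ≤ n) (hlam : ∀ k < n, lam k < lam (k + 1))
    (d : ℕ) (hd : 1 ≤ d) (f : ℕ → ℕ × ℕ)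
    (hmem : ∀ k, 1 ≤ k → k ≤ d → PMem n lam (f k))
    (hch : ∀ k, 1 ≤ k → k < d → Rstr lam (f k) (f (k + 1))) :
    d ≤ dI n lam := by
  have step : ∀ k, 1 ≤ k → k < d →
      (f k).2 < (f (k + 1)).2 ∧ lam (f k).2 + 2 ≤ lam (f (k + 1)).2 := by
    intro k h1 h2
    have hp := hmem k h1 (le_of_lt h2)
    have hq := hmem (k + 1) (by omega) h2
    have hr := hch k h1 h2
    have hgap : lam (f k).2 + 2 ≤ lam (f (k + 1)).2 := by
      unfold PMem at hp hq
      unfold Rstr at hr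
      omega
    refine ⟨?_, hgap⟩
    by_contra hc
    push_neg at hc
    have := lam_mono n lam hlam (f (k + 1)).2 (f k).2 hc hp.2.1
    omega
  have dom : ∀ k, k < d → gseq lam k ≤ (f (k + 1)).2 := by
    intro k
    induction k with
    | zero =>
      intro h
      have := (hmem 1 (le_refl 1) hd).1
      simpa [gseq] using this
    | succ k ih =>
      intro hk
      have hkk := ih (by omega)
      have hs := step (k + 1) (by omega) hk
      rw [gseq_succ]
      rcases Nat.eq_or_lt_of_le hkk with h | h
      · -- gseq lam k = (f (k+1)).2
        unfold gstep
        split_ifs with hgap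
        · omega
        · -- lam (g+1) - lam g ≤ 1, so (f (k+2)).2 ≠ g + 1
          by_contra hc
          push_neg at hc
          have he : (f (k + 1 + 1)).2 = gseq lam k + 1 := by omega
          rw [he, ← h] at hs
          omega
      · have := gstep_bounds lam (gseq lam k)
        omega
  obtain ⟨m, rfl⟩ : ∃ m, d = m + 1 := ⟨d - 1, by omega⟩
  have h1 := dom m (by omega)
  have h2 := (hmem (m + 1) (by omega) (le_refl _)).2.1
  exact (dI_spec n lam hn).2.2 (m + 1) (by omega) (by simpa using le_trans h1 h2)

/-- The set of lengths of strict chains ending at `p`. -/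
def Hset (p : ℕ × ℕ) : Set ℕ :=
  {d | 1 ≤ d ∧ ∃ f : ℕ → ℕ × ℕ,
    (∀ k, 1 ≤ k → k ≤ d → PMem n lam (f k)) ∧
    (∀ k, 1 ≤ k → k < d → Rstr lam (f k) (f (k + 1))) ∧ f d = p}

/-- Height of `p`: the longest strict chain ending at `p`. -/
noncomputable def hgt (p : ℕ × ℕ) : ℕ := sSup (Hset n lam p)

lemma Hset_bdd (hn : 1 ≤ n) (hlam : ∀ k < n, lam k < lam (k + 1)) (p : ℕ × ℕ) :
    BddAbove (Hset n lam p) := by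
  refine ⟨dI n lam, fun d hd => ?_⟩
  obtain ⟨hd1, f, h1, h2, _⟩ := hd
  exact chain_le n lam hn hlam d hd1 f h1 h2

lemma hgt_mem (hn : 1 ≤ n) (hlam : ∀ k < n, lam k < lam (k + 1))
    (p : ℕ × ℕ) (hp : PMem n lam p) :
    hgt n lam p ∈ Hset n lam p ∧ 1 ≤ hgt n lam p ∧ hgt n lam p ≤ dI n lam := by
  have hone : (1 : ℕ) ∈ Hset n lam p := by
    refine ⟨le_refl 1, fun _ => p, ?_, ?_, rfl⟩
    · intro k hk1 hk2
      have : k = 1 := by omega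
      subst this; exact hp
    · intro k hk1 hk2; omega
  have hbdd := Hset_bdd n lam hn hlam p
  have hmem := Nat.sSup_mem ⟨1, hone⟩ hbdd
  have hle : hgt n lam p ≤ dI n lam := by
    obtain ⟨hd1, f, h1, h2, _⟩ := hmem
    exact chain_le n lam hn hlam _ hd1 f h1 h2
  exact ⟨hmem, le_csSup hbdd hone, hle⟩

lemma hgt_lt (hn : 1 ≤ n) (hlam : ∀ k < n, lam k < lam (k + 1))
    (p q : ℕ × ℕ) (hp : PMem n lam p) (hq : PMem n lam q) (hr : Rstr lam p q) :
    hgt n lam p < hgt n lam q := by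
  obtain ⟨⟨hd1, f, h1, h2, h3⟩, hge1, _⟩ := hgt_mem n lam hn hlam p hp
  set m := hgt n lam p with hm
  have hmem : m + 1 ∈ Hset n lam q := by
    refine ⟨by omega, fun k => if k ≤ m then f k else q, ?_, ?_, ?_⟩
    · intro k hk1 hk2
      by_cases h : k ≤ m
      · simpa [h] using h1 k hk1 h
      · simpa [h] using hq
    · intro k hk1 hk2
      by_cases h : k < m
      · have h' : k ≤ m := by omega
        have h'' : k + 1 ≤ m := by omega
        simpa [h', h''] using h2 k hk1 h
      · have hkm : k = m := by omega
        have h' : k ≤ m := by omega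
        show Rstr lam (if k ≤ m then f k else q) (if k + 1 ≤ m then f (k + 1) else q)
        rw [if_pos h', if_neg (show ¬ (k + 1 ≤ m) by omega), hkm, h3]
        exact hr
    · show (if m + 1 ≤ m then f (m + 1) else q) = q
      rw [if_neg (by omega)]
  have hbdd := Hset_bdd n lam hn hlam q
  have hle : m + 1 ≤ hgt n lam q := le_csSup hbdd hmem
  omega

end Main

theorem stmt15 (n : ℕ) (hn : 1 ≤ n) (lam : ℕ → ℕ) (hlam0 : lam 0 = 0)
    (hlam : ∀ k < n, lam k < lam (k + 1)) :
    (∃ c : ℕ × ℕ → ℕ, (∀ p, PMem n lam p → c p < dI n lam) ∧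
      ∀ p q, PMem n lam p → PMem n lam q → c p = c q → POrd lam p q ∨ POrd lam q p) ∧
    (∃ S : Finset (ℕ × ℕ), S.card = dI n lam ∧ (∀ p ∈ S, PMem n lam p) ∧
      ∀ p ∈ S, ∀ q ∈ S, p ≠ q → ¬ POrd lam p q) := by
  obtain ⟨hD1, hDn, hDmax⟩ := dI_spec n lam hn
  constructor
  · -- chain partition via height coloring
    refine ⟨fun p => hgt n lam p - 1, ?_, ?_⟩
    · intro p hp
      obtain ⟨_, h1, h2⟩ := hgt_mem n lam hn hlam p hp
      show hgt n lam p - 1 < dI n lam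
      omega
    · intro p q hp hq hc
      have hc' : hgt n lam p - 1 = hgt n lam q - 1 := hc
      by_contra hcon
      push_neg at hcon
      obtain ⟨h1, h2⟩ := hcon
      have hpq : Rstr lam p q ∨ Rstr lam q p := by
        unfold PMem at hp hq
        unfold POrd at h1 h2
        unfold Rstr
        omega
      obtain ⟨_, hp1, _⟩ := hgt_mem n lam hn hlam p hp
      obtain ⟨_, hq1, _⟩ := hgt_mem n lam hn hlam q hq
      rcases hpq with hr | hr
      · have := hgt_lt n lam hn hlam p q hp hq hr
        omega
      · have := hgt_lt n lam hn hlam q p hq hp hr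
        omega
  · -- antichain
    refine ⟨(Finset.Icc 1 (dI n lam)).image (fun k => (k, gseq lam (k - 1))), ?_, ?_, ?_⟩
    · rw [Finset.card_image_of_injective _ (fun a b h => congrArg Prod.fst h)]
      simp
    · intro p hp
      simp only [Finset.mem_image, Finset.mem_Icc] at hp
      obtain ⟨k, ⟨hk1, hk2⟩, rfl⟩ := hp
      have hgn : gseq lam (k - 1) ≤ n :=
        le_trans (gseq_mono lam (by omega : k - 1 ≤ dI n lam - 1)) hDn
      have hge := lam_gseq_ge n lam hn hlam0 hlam (k - 1) hgn
      have h1 := gseq_ge lam (k - 1)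
      exact ⟨show 1 ≤ gseq lam (k - 1) by omega, hgn, hk1,
        show k ≤ lam (gseq lam (k - 1)) by omega⟩
    · intro p hp q hq hne
      simp only [Finset.mem_image, Finset.mem_Icc] at hp hq
      obtain ⟨k, ⟨hk1, hk2⟩, rfl⟩ := hp
      obtain ⟨l, ⟨hl1, hl2⟩, rfl⟩ := hq
      have hkl : k ≠ l := by
        intro h; subst h; exact hne rfl
      intro hord
      have hord1 : k ≤ l := hord.1
      have hord2 : lam (gseq lam (l - 1)) - l ≤ lam (gseq lam (k - 1)) - k := hord.2
      clear hord
      rcases Nat.lt_or_ge k l with h | h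
      · have hgln : gseq lam (l - 1) ≤ n :=
          le_trans (gseq_mono lam (by omega : l - 1 ≤ dI n lam - 1)) hDn
        have hgap := lam_gseq_gap n lam hlam (k - 1) (l - 1) (by omega) hgln
        have hgkn : gseq lam (k - 1) ≤ n :=
          le_trans (gseq_mono lam (by omega : k - 1 ≤ l - 1)) hgln
        have hge := lam_gseq_ge n lam hn hlam0 hlam (k - 1) hgkn
        omega
      · omega
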